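/- arXiv:2503.13866 — 4 statements merged into one kernel-verified Lean document; each statement's English description precedes it below -/
import Mathlib

section
/- Let β* = sup_{τ ≥ 0} (∑_{k=1}^{τ} r(k))/(τ+1) be attained at τ*. Then γ(1+τ*) ≤ β* where γ(δ) = sup_{m ≥ 1} (1/m)∑_{k=0}^{m-1} r(δ+k), provided lim sup_{δ→∞} r(δ) ≤ β*; that is, at the optimal stopping age the index has dropped to or below the optimal average reward. -/
open Finset Filter

/-- If `β* = sup_{τ ≥ 0} F(τ)` is attained at `τ*`, where
`F(τ) = (∑_{k=1}^{τ} r(k))/(τ+1)`, and `lim sup_{δ→∞} r(δ) ≤ β*`, then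
`γ(1+τ*) ≤ β*`, where `γ(δ) = sup_{m ≥ 1} (1/m)∑_{k=0}^{m-1} r(δ+k)`. -/
theorem stmt_6 (r : ℕ → ℝ) (hnn : ∀ n, 0 ≤ r n) (hbdd : ∃ M : ℝ, ∀ n, |r n| ≤ M)
    (F : ℕ → ℝ) (hF : ∀ τ : ℕ, F τ = (∑ k ∈ Finset.Icc 1 τ, r k) / ((τ : ℝ) + 1))
    (γ : ℕ → ℝ)
    (hγ : ∀ δ : ℕ, γ δ =
      ⨆ m : {n : ℕ // 1 ≤ n}, (1 / (m : ℝ)) * ∑ k ∈ Finset.range (m : ℕ), r (δ + k))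
    (βs : ℝ) (hβs : βs = ⨆ τ : ℕ, F τ)
    (τs : ℕ) (hatt : F τs = βs)
    (hls : Filter.limsup r Filter.atTop ≤ βs) :
    γ (1 + τs) ≤ βs := by
  obtain ⟨M, hM⟩ := hbdd
  have hM0 : 0 ≤ M := le_trans (abs_nonneg _) (hM 0)
  -- F is bounded above by M
  have hbddF : BddAbove (Set.range F) := by
    refine ⟨M, ?_⟩
    rintro x ⟨τ, rfl⟩
    rw [hF]
    have hpos : (0 : ℝ) < (τ : ℝ) + 1 := by positivity
    rw [div_le_iff₀ hpos]
    calc ∑ k ∈ Finset.Icc 1 τ, r k ≤ ∑ k ∈ Finset.Icc 1 τ, M := by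
          exact Finset.sum_le_sum fun i _ => le_trans (le_abs_self _) (hM i)
      _ = (τ : ℝ) * M := by
          rw [Finset.sum_const, Nat.card_Icc]; simp [mul_comm]
      _ ≤ M * ((τ : ℝ) + 1) := by nlinarith
  have hFle : ∀ τ, F τ ≤ βs := by
    intro τ; rw [hβs]; exact le_ciSup hbddF τ
  -- sum splitting
  have hsplit : ∀ τ m : ℕ, ∑ k ∈ Finset.Icc 1 (τ + m), r k =
      (∑ k ∈ Finset.Icc 1 τ, r k) + ∑ k ∈ Finset.range m, r (1 + τ + k) := by
    intro τ m
    induction m with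
    | zero => simp
    | succ n ih =>
      have h : τ + (n + 1) = (τ + n) + 1 := by omega
      rw [h, Finset.sum_Icc_succ_top (by omega), ih, Finset.sum_range_succ]
      have h2 : 1 + τ + n = τ + n + 1 := by omega
      rw [h2, add_assoc]
  rw [hγ]
  apply ciSup_le
  rintro ⟨m, hm⟩
  simp only
  have hkey : F (τs + m) ≤ βs := hFle _
  rw [hF, hsplit] at hkey
  rw [hF] at hatt
  have hmpos : (0 : ℝ) < (m : ℝ) := by exact_mod_cast hm
  have hτpos : (0 : ℝ) < (τs : ℝ) + 1 := by positivity
  have hτmpos : (0 : ℝ) < ((τs : ℝ) + (m : ℝ)) + 1 := by positivity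
  push_cast at hkey
  rw [← hatt, div_le_div_iff₀ hτmpos hτpos] at hkey
  set S := ∑ k ∈ Finset.Icc 1 τs, r k with hS
  set T := ∑ k ∈ Finset.range m, r (1 + τs + k) with hT
  rw [← hatt, one_div, inv_mul_le_iff₀ hmpos, ← mul_div_assoc,
    le_div_iff₀ hτpos]
  nlinarith [hkey]
end

section
/- Let β* = max_{τ ≥ 0} (∑_{k=1}^{τ} r(k))/(τ+1) be attained at τ*, and suppose τ* is the smallest maximizer. Then for every 1 ≤ δ ≤ τ*, the index satisfies γ(δ) > β*, where γ(δ) = sup_{m ≥ 1} (1/m)∑_{k=0}^{m-1} r(δ+k); that is, before the optimal stopping age the index stays strictly above the threshold. -/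
open Finset

/-- If `τ*` is the smallest maximizer of
`F(τ) = (∑_{k=1}^{τ} r(k))/(τ+1)` with maximum value `β* = F(τ*)`, then for every
`1 ≤ δ ≤ τ*` the index satisfies `γ(δ) > β*`, where
`γ(δ) = sup_{m ≥ 1} (1/m)∑_{k=0}^{m-1} r(δ+k)`. -/
theorem stmt_7 (r : ℕ → ℝ) (hnn : ∀ n, 0 ≤ r n) (hbdd : ∃ M : ℝ, ∀ n, |r n| ≤ M)
    (F : ℕ → ℝ) (hF : ∀ τ : ℕ, F τ = (∑ k ∈ Finset.Icc 1 τ, r k) / ((τ : ℝ) + 1))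
    (γ : ℕ → ℝ)
    (hγ : ∀ δ : ℕ, γ δ =
      ⨆ m : {n : ℕ // 1 ≤ n}, (1 / (m : ℝ)) * ∑ k ∈ Finset.range (m : ℕ), r (δ + k))
    (τs : ℕ) (hmax : ∀ τ : ℕ, F τ ≤ F τs)
    (hmin : ∀ τ : ℕ, τ < τs → F τ < F τs)
    (βs : ℝ) (hβs : βs = F τs) :
    ∀ δ : ℕ, 1 ≤ δ → δ ≤ τs → βs < γ δ := by
  intro δ hδ1 hδτ
  obtain ⟨M, hM⟩ := hbdd
  -- boundedness of the range
  have hbdd' : BddAbove (Set.range fun m : {n : ℕ // 1 ≤ n} =>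
      (1 / (m : ℝ)) * ∑ k ∈ Finset.range (m : ℕ), r (δ + k)) := by
    refine ⟨M, ?_⟩
    rintro x ⟨m, rfl⟩
    have hm0 : (0:ℝ) < (m : ℕ) := by exact_mod_cast m.2
    have hsum : ∑ k ∈ Finset.range (m : ℕ), r (δ + k) ≤ (m : ℕ) * M := by
      calc ∑ k ∈ Finset.range (m : ℕ), r (δ + k)
          ≤ ∑ _k ∈ Finset.range (m : ℕ), M :=
            Finset.sum_le_sum (fun i _ => (abs_le.mp (hM _)).2)
        _ = (m : ℕ) * M := by simp [mul_comm]
    have := (div_le_iff₀ hm0).mpr (by linarith [hsum] : ∑ k ∈ Finset.range (m : ℕ), r (δ + k) ≤ M * (m : ℕ))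
    simpa [one_div, inv_mul_eq_div] using this
  obtain ⟨d, rfl⟩ : ∃ d, δ = d + 1 := ⟨δ - 1, (Nat.succ_pred_eq_of_pos hδ1).symm⟩
  have hd : d < τs := hδτ
  set m : ℕ := τs - d with hm
  have hm1 : 1 ≤ m := by omega
  have hmR : (0:ℝ) < (m : ℝ) := by exact_mod_cast hm1
  -- sum identities
  have hsplit : (∑ k ∈ Finset.Icc 1 d, r k) + (∑ k ∈ Finset.Ico (d+1) (τs+1), r k)
      = ∑ k ∈ Finset.Icc 1 τs, r k := by
    rw [← Finset.Ico_add_one_right_eq_Icc, ← Finset.Ico_add_one_right_eq_Icc]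
    exact Finset.sum_Ico_consecutive _ (by omega) (by omega)
  have hshift : ∑ k ∈ Finset.Ico (d+1) (τs+1), r k
      = ∑ k ∈ Finset.range m, r (d + 1 + k) := by
    rw [Finset.sum_Ico_eq_sum_range]
    have h : τs + 1 - (d + 1) = m := by omega
    rw [h]
  -- numeric inequalities
  have hFd : F d < F τs := hmin d hd
  have hSd : (∑ k ∈ Finset.Icc 1 d, r k) < F τs * ((d:ℝ) + 1) := by
    have := hF d
    rw [this] at hFd
    have hd0 : (0:ℝ) < (d:ℝ) + 1 := by positivity
    calc (∑ k ∈ Finset.Icc 1 d, r k)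
        = ((∑ k ∈ Finset.Icc 1 d, r k) / ((d:ℝ)+1)) * ((d:ℝ)+1) := by field_simp
      _ < F τs * ((d:ℝ)+1) := by
          exact mul_lt_mul_of_pos_right hFd hd0
  have hSτ : (∑ k ∈ Finset.Icc 1 τs, r k) = F τs * ((τs:ℝ) + 1) := by
    rw [hF τs]; field_simp
  have hT : F τs * (m : ℝ) < ∑ k ∈ Finset.range m, r (d + 1 + k) := by
    have hcast : (m : ℝ) = (τs : ℝ) - (d : ℝ) := by
      have : (m : ℕ) + d = τs := by omega
      have := congrArg (fun n : ℕ => (n : ℝ)) this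
      push_cast at this
      linarith
    rw [← hshift]
    have : (∑ k ∈ Finset.Ico (d+1) (τs+1), r k)
        = (∑ k ∈ Finset.Icc 1 τs, r k) - ∑ k ∈ Finset.Icc 1 d, r k := by
      linarith [hsplit]
    rw [this, hSτ, hcast]
    nlinarith [hSd]
  -- conclude via le_ciSup
  have hle : (1 / (m : ℝ)) * ∑ k ∈ Finset.range m, r (d + 1 + k) ≤ γ (d + 1) := by
    rw [hγ]
    exact le_ciSup hbdd' (⟨m, hm1⟩ : {n : ℕ // 1 ≤ n})
  have hv : βs < (1 / (m : ℝ)) * ∑ k ∈ Finset.range m, r (d + 1 + k) := by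
    rw [hβs, one_div, inv_mul_eq_div, lt_div_iff₀ hmR]
    linarith [hT]
  linarith
end

section
/- Fix a goodput function G : ℝ → ℝ that is nondecreasing and bounded, and a SINR function η(δ, y) as in the pilot-estimation model. If |ρ_h(δ₁)| ≤ |ρ_h(δ₂)|, then for every observation y, G(η(δ₁, y)) ≤ G(η(δ₂, y)); consequently the expected maximum goodput r(δ) = E[G(η(δ, Y))] (over any fixed distribution of Y) satisfies r(δ₁) ≤ r(δ₂). In particular, r is non-monotonic in δ whenever |ρ_h(·)| is non-monotonic. -/
/-!
The SINR is increasing in the correlation magnitude `r = |ρ_h(δ)|` on `[0, ρ₀]`: its numerator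
`P_d P_p r² |y|² / (P_p ρ₀ + σ²)²` grows with `r`, while its denominator, the estimation error
variance `ρ₀ - P_p r² / (P_p ρ₀ + σ²)` scaled by `P_d` plus the noise `σ²`, shrinks but stays
positive. Composing with the monotone goodput preserves the pointwise inequality, and boundedness
of the goodput makes both expectations integrable, so they compare in the same order.
-/

open MeasureTheory Set

/-- The SINR `η(δ, y)` written as a function of `r = |ρ_h(δ)|`. -/
noncomputable def pilotSINR (Pd Pp σ2 ρ₀ r : ℝ) (y : ℂ) : ℝ :=
  Pd * (Real.sqrt Pp * r / (Pp * ρ₀ + σ2)) ^ 2 * ‖y‖ ^ 2 /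
    (Pd * (ρ₀ - Pp * r ^ 2 / (Pp * ρ₀ + σ2)) + σ2)

lemma continuous_pilotSINR (Pd Pp σ2 ρ₀ r : ℝ) : Continuous (pilotSINR Pd Pp σ2 ρ₀ r) := by
  unfold pilotSINR
  fun_prop

section PilotSINR

variable {Pd Pp σ2 ρ₀ : ℝ}

lemma estimationError_nonneg (hPp : 0 ≤ Pp) (hσ2 : 0 < σ2) {r : ℝ} (hr : r ∈ Icc 0 ρ₀) :
    0 ≤ ρ₀ - Pp * r ^ 2 / (Pp * ρ₀ + σ2) := by
  obtain ⟨hr0, hrρ⟩ := hr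
  have hden : 0 < Pp * ρ₀ + σ2 := by nlinarith
  rw [sub_nonneg, div_le_iff₀ hden]
  nlinarith [mul_le_mul hrρ hrρ hr0 (hr0.trans hrρ)]

lemma pilotSINR_monotoneOn (hPd : 0 ≤ Pd) (hPp : 0 ≤ Pp) (hσ2 : 0 < σ2) (y : ℂ) :
    MonotoneOn (fun r => pilotSINR Pd Pp σ2 ρ₀ r y) (Icc 0 ρ₀) := by
  intro r₁ hr₁ r₂ hr₂ hr
  have hden : 0 < Pp * ρ₀ + σ2 := by nlinarith [hr₁.1.trans hr₁.2]
  have hsq : r₁ ^ 2 ≤ r₂ ^ 2 := pow_le_pow_left₀ hr₁.1 hr 2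
  have herr₂ := estimationError_nonneg hPp hσ2 hr₂
  simp only [pilotSINR]
  apply div_le_div₀
  · positivity
  · rw [div_pow, div_pow, mul_pow, mul_pow, Real.sq_sqrt hPp]
    gcongr
  · positivity
  · gcongr

end PilotSINR

lemma integral_comp_le_integral_comp_of_le {Ω : Type*} [MeasurableSpace Ω] {μ : Measure Ω}
    [IsFiniteMeasure μ] {G : ℝ → ℝ} (hG : Monotone G) (hGb : ∃ M : ℝ, ∀ x, |G x| ≤ M)
    {f g : Ω → ℝ} (hf : Measurable f) (hg : Measurable g) (hfg : ∀ ω, f ω ≤ g ω) :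
    ∫ ω, G (f ω) ∂μ ≤ ∫ ω, G (g ω) ∂μ := by
  obtain ⟨M, hM⟩ := hGb
  have hint : ∀ h : Ω → ℝ, Measurable h → Integrable (fun ω => G (h ω)) μ := fun h hh =>
    .of_bound (hG.measurable.comp hh).aestronglyMeasurable M (.of_forall fun ω => hM (h ω))
  exact integral_mono (hint f hf) (hint g hg) fun ω => hG (hfg ω)

theorem stmt_15_general {Ω : Type*} [MeasureSpace Ω] (μ : Measure Ω) [IsProbabilityMeasure μ]
    (Pd Pp σ2 ρ₀ : ℝ) (hPd : 0 < Pd) (hPp : 0 < Pp) (hσ2 : 0 < σ2)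
    (ρh : ℕ → ℂ) (hCS : ∀ δ : ℕ, ‖ρh δ‖ ≤ ρ₀)
    (A : ℕ → ℝ) (hA : ∀ δ, A δ = Real.sqrt Pp * ‖ρh δ‖ / (Pp * ρ₀ + σ2))
    (η : ℕ → ℂ → ℝ)
    (hη : ∀ δ y, η δ y =
      Pd * (A δ) ^ 2 * ‖y‖ ^ 2 /
        (Pd * (ρ₀ - Pp * ‖ρh δ‖ ^ 2 / (Pp * ρ₀ + σ2)) + σ2))
    (G : ℝ → ℝ) (hG : Monotone G) (hGb : ∃ M : ℝ, ∀ x, |G x| ≤ M)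
    (Y : Ω → ℂ) (hYmeas : Measurable Y)
    (rfun : ℕ → ℝ) (hr : ∀ δ, rfun δ = ∫ ω, G (η δ (Y ω)) ∂μ)
    (δ₁ δ₂ : ℕ) (hmono : ‖ρh δ₁‖ ≤ ‖ρh δ₂‖) :
    (∀ y : ℂ, G (η δ₁ y) ≤ G (η δ₂ y)) ∧ rfun δ₁ ≤ rfun δ₂ := by
  have hη_eq : ∀ δ, η δ = pilotSINR Pd Pp σ2 ρ₀ ‖ρh δ‖ := fun δ => by
    funext y
    rw [hη, hA, pilotSINR]
  have hη_le : ∀ y, η δ₁ y ≤ η δ₂ y := fun y => by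
    rw [hη_eq, hη_eq]
    exact pilotSINR_monotoneOn hPd.le hPp.le hσ2 y ⟨norm_nonneg _, hCS δ₁⟩
      ⟨norm_nonneg _, hCS δ₂⟩ hmono
  have hη_meas : ∀ δ, Measurable fun ω => η δ (Y ω) := fun δ => by
    rw [hη_eq]
    exact (continuous_pilotSINR _ _ _ _ _).measurable.comp hYmeas
  refine ⟨fun y => hG (hη_le y), ?_⟩
  rw [hr, hr]
  exact integral_comp_le_integral_comp_of_le hG hGb (hη_meas δ₁) (hη_meas δ₂)
    fun ω => hη_le (Y ω)

/-- For a nondecreasing bounded goodput `G` and the SINR `η(δ,y)` of the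
pilot-estimation model, if `|ρ_h(δ₁)| ≤ |ρ_h(δ₂)|` then `G(η(δ₁,y)) ≤ G(η(δ₂,y))` for
every `y`, and consequently the expected maximum goodput
`r(δ) = E[G(η(δ, Y))]` satisfies `r(δ₁) ≤ r(δ₂)`. -/
theorem stmt_15 {Ω : Type*} [MeasureSpace Ω] (μ : Measure Ω) [IsProbabilityMeasure μ]
    (Pd Pp σ2 ρ₀ : ℝ) (hPd : 0 < Pd) (hPp : 0 < Pp) (hσ2 : 0 < σ2) (hρ₀ : 0 < ρ₀)
    (ρh : ℕ → ℂ) (hCS : ∀ δ : ℕ, ‖ρh δ‖ ≤ ρ₀)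
    (A : ℕ → ℝ) (hA : ∀ δ, A δ = Real.sqrt Pp * ‖ρh δ‖ / (Pp * ρ₀ + σ2))
    (η : ℕ → ℂ → ℝ)
    (hη : ∀ δ y, η δ y =
      Pd * (A δ) ^ 2 * ‖y‖ ^ 2 /
        (Pd * (ρ₀ - Pp * ‖ρh δ‖ ^ 2 / (Pp * ρ₀ + σ2)) + σ2))
    (G : ℝ → ℝ) (hG : Monotone G) (hGb : ∃ M : ℝ, ∀ x, |G x| ≤ M)
    (Y : Ω → ℂ) (hYmeas : Measurable Y) (hY2 : MeasureTheory.MemLp Y 2 μ)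
    (rfun : ℕ → ℝ) (hr : ∀ δ, rfun δ = ∫ ω, G (η δ (Y ω)) ∂μ)
    (δ₁ δ₂ : ℕ) (hmono : ‖ρh δ₁‖ ≤ ‖ρh δ₂‖) :
    (∀ y : ℂ, G (η δ₁ y) ≤ G (η δ₂ y)) ∧ rfun δ₁ ≤ rfun δ₂ :=
  stmt_15_general μ Pd Pp σ2 ρ₀ hPd hPp hσ2 ρh hCS A hA η hη G hG hGb Y hYmeas rfun hr δ₁ δ₂ hmono
end

section
/- For any bounded reward r : ℕ → ℝ and any causal scheduling policy producing indicator c : ℕ → {0,1} and induced age Δ via Δ(t+1) = 1 if c(t)=1 else Δ(t)+1 with Δ(1)=1, the long-run average reward lim sup_{T→∞} (1/T)∑_{t=1}^{T}(1−c(t))·r(Δ(t)) is at most sup_{τ≥0} (∑_{k=1}^{τ} r(k))/(τ+1), provided r is nonnegative. -/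
/-!
Let `S` be the best per-cycle ratio, so that `∑_{k=1}^{τ} r k ≤ S (τ + 1)` for every `τ`.
Being at age `a` is worth the potential `V a = S a - ∑_{k<a} r k`, which is nonnegative by that
bound. In every slot the reward is at most `S + V (Δ t) - V (Δ (t+1))`: a pilot resets the age
to `1` at the cost of the nonnegative `V (Δ t)`, and otherwise the age grows by one and `V` grows
by exactly `S - r (Δ t)`. Telescoping gives a total reward of at most `S (T + 1)` after `T` slots,
whether or not the last cycle ever ends.
-/

open Finset Filter

section CycleRatio

variable (r : ℕ → ℝ)

lemma bddAbove_range_sum_Icc_div {M : ℝ} (hM : ∀ n, r n ≤ M) :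
    BddAbove (Set.range fun τ : ℕ => (∑ k ∈ Icc 1 τ, r k) / ((τ : ℝ) + 1)) := by
  refine ⟨|M|, ?_⟩
  rintro _ ⟨τ, rfl⟩
  rw [div_le_iff₀ (by positivity)]
  calc ∑ k ∈ Icc 1 τ, r k ≤ ∑ _k ∈ Icc 1 τ, |M| :=
        sum_le_sum fun k _ => (hM k).trans (le_abs_self M)
    _ = |M| * τ := by simp [mul_comm]
    _ ≤ |M| * (τ + 1) := by gcongr; linarith

lemma sum_Icc_le_ciSup_div_mul
    (hr : BddAbove (Set.range fun τ : ℕ => (∑ k ∈ Icc 1 τ, r k) / ((τ : ℝ) + 1))) (τ : ℕ) :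
    ∑ k ∈ Icc 1 τ, r k ≤ (⨆ τ : ℕ, (∑ k ∈ Icc 1 τ, r k) / ((τ : ℝ) + 1)) * (τ + 1) :=
  (div_le_iff₀ (by positivity)).mp (le_ciSup hr τ)

end CycleRatio

section AgePotential

variable (r : ℕ → ℝ) (S : ℝ)

def agePotential (a : ℕ) : ℝ := S * a - ∑ k ∈ Ico 1 a, r k

variable {r S}

@[simp]
lemma agePotential_one : agePotential r S 1 = S := by
  simp [agePotential]

lemma agePotential_succ {a : ℕ} (ha : 1 ≤ a) :
    agePotential r S (a + 1) = agePotential r S a + S - r a := by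
  simp only [agePotential, sum_Ico_succ_top ha, Nat.cast_add, Nat.cast_one]
  ring

lemma agePotential_nonneg (hS : ∀ τ : ℕ, ∑ k ∈ Icc 1 τ, r k ≤ S * (τ + 1)) {a : ℕ}
    (ha : 1 ≤ a) : 0 ≤ agePotential r S a := by
  obtain ⟨τ, rfl⟩ := Nat.exists_eq_add_of_le' ha
  have := hS τ
  rw [agePotential, Ico_add_one_right_eq_Icc]
  push_cast
  linarith

end AgePotential

lemma sum_Icc_le_mul_add_sub {f V : ℕ → ℝ} {S : ℝ}
    (h : ∀ t, 1 ≤ t → f t ≤ S + V t - V (t + 1)) (T : ℕ) :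
    ∑ t ∈ Icc 1 T, f t ≤ S * T + V 1 - V (T + 1) := by
  induction T with
  | zero => simp
  | succ T ih =>
    rw [sum_Icc_succ_top (by omega)]
    have := h (T + 1) (by omega)
    push_cast
    linarith

lemma limsup_div_le_of_le_mul_add_one {u : ℕ → ℝ} {m S : ℝ} (hlow : ∀ T : ℕ, m * T ≤ u T)
    (hup : ∀ T : ℕ, u T ≤ S * (T + 1)) :
    limsup (fun T : ℕ => (1 / (T : ℝ)) * u T) atTop ≤ S := by
  have hbound : Tendsto (fun T : ℕ => S * (1 + 1 / (T : ℝ))) atTop (nhds S) := by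
    simpa using tendsto_one_div_atTop_nhds_zero_nat.const_add 1 |>.const_mul S
  have hcobdd : IsCoboundedUnder (· ≤ ·) atTop fun T : ℕ => (1 / (T : ℝ)) * u T := by
    refine isCoboundedUnder_le_of_eventually_le atTop (x := min m 0) ?_
    filter_upwards [eventually_ge_atTop 1] with T hT
    have hT : (0 : ℝ) < T := by exact_mod_cast hT
    rw [one_div_mul_eq_div, le_div_iff₀ hT]
    nlinarith [hlow T, min_le_left m 0, min_le_right m 0]
  have hle : ∀ᶠ T : ℕ in atTop, (1 / (T : ℝ)) * u T ≤ S * (1 + 1 / (T : ℝ)) := by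
    filter_upwards [eventually_ge_atTop 1] with T hT
    have hT : (0 : ℝ) < T := by exact_mod_cast hT
    rw [one_div_mul_eq_div, div_le_iff₀ hT, mul_assoc, add_mul, one_div_mul_cancel hT.ne']
    linarith [hup T]
  exact (limsup_le_limsup hle hcobdd hbound.isBoundedUnder_le).trans_eq hbound.limsup_eq

section Age

variable {c : ℕ → Bool} {Δ : ℕ → ℕ} (hΔ1 : Δ 1 = 1)
  (hrec : ∀ t : ℕ, 1 ≤ t → Δ (t + 1) = if c t then 1 else Δ t + 1)
include hΔ1 hrec

lemma one_le_age {t : ℕ} (ht : 1 ≤ t) : 1 ≤ Δ t := by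
  induction t, ht using Nat.le_induction with
  | base => rw [hΔ1]
  | succ t ht _ => rw [hrec t ht]; split <;> omega

lemma reward_le_agePotential_sub {r : ℕ → ℝ} {S : ℝ}
    (hS : ∀ τ : ℕ, ∑ k ∈ Icc 1 τ, r k ≤ S * (τ + 1)) {t : ℕ} (ht : 1 ≤ t) :
    (if c t then 0 else r (Δ t)) ≤ S + agePotential r S (Δ t) - agePotential r S (Δ (t + 1)) := by
  have hage := one_le_age hΔ1 hrec ht
  rw [hrec t ht]
  split
  · simpa using agePotential_nonneg hS hage
  · rw [agePotential_succ hage]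
    linarith

lemma sum_reward_le {r : ℕ → ℝ} {S : ℝ}
    (hS : ∀ τ : ℕ, ∑ k ∈ Icc 1 τ, r k ≤ S * (τ + 1)) (T : ℕ) :
    ∑ t ∈ Icc 1 T, (if c t then 0 else r (Δ t)) ≤ S * (T + 1) := by
  have htele := sum_Icc_le_mul_add_sub (f := fun t => if c t then 0 else r (Δ t))
    (V := fun t => agePotential r S (Δ t)) (fun _ => reward_le_agePotential_sub hΔ1 hrec hS) T
  have hlast := agePotential_nonneg hS (one_le_age hΔ1 hrec (Nat.le_add_left 1 T))
  rw [hΔ1, agePotential_one] at htele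
  linarith

end Age

lemma sum_ite_zero_ge_mul {r : ℕ → ℝ} {M : ℝ} (hM : ∀ n, |r n| ≤ M) (c : ℕ → Bool)
    (Δ : ℕ → ℕ) (T : ℕ) : -M * T ≤ ∑ t ∈ Icc 1 T, (if c t then 0 else r (Δ t)) := by
  have hM0 : 0 ≤ M := (abs_nonneg _).trans (hM 0)
  have hterm : ∀ t ∈ Icc 1 T, -M ≤ if c t then 0 else r (Δ t) := fun t _ => by
    split
    · linarith
    · exact neg_le_of_abs_le (hM _)
  simpa [mul_comm] using card_nsmul_le_sum _ _ _ hterm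

theorem stmt_16_general (r : ℕ → ℝ) (hbdd : ∃ M : ℝ, ∀ n, |r n| ≤ M)
    (c : ℕ → Bool) (Δ : ℕ → ℕ) (hΔ1 : Δ 1 = 1)
    (hrec : ∀ t : ℕ, 1 ≤ t → Δ (t + 1) = if c t then 1 else Δ t + 1) :
    Filter.limsup
      (fun T : ℕ => (1 / (T : ℝ)) *
        ∑ t ∈ Finset.Icc 1 T, (if c t then 0 else r (Δ t)))
      Filter.atTop
      ≤ ⨆ τ : ℕ, (∑ k ∈ Finset.Icc 1 τ, r k) / ((τ : ℝ) + 1) := by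
  obtain ⟨M, hM⟩ := hbdd
  have hcycle := sum_Icc_le_ciSup_div_mul r
    (bddAbove_range_sum_Icc_div r fun n => (le_abs_self _).trans (hM n))
  exact limsup_div_le_of_le_mul_add_one (sum_ite_zero_ge_mul hM c Δ) (sum_reward_le hΔ1 hrec hcycle)

/-- For any nonnegative bounded reward `r` and any scheduling policy
`c : ℕ → Bool` with induced age `Δ(t+1) = 1` if `c(t)` else `Δ(t)+1`, `Δ(1) = 1`, the
long-run average reward `lim sup_{T→∞} (1/T)∑_{t=1}^{T}(1−c(t))·r(Δ(t))` is at most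
`sup_{τ≥0} (∑_{k=1}^{τ} r(k))/(τ+1)`. -/
theorem stmt_16 (r : ℕ → ℝ) (hnn : ∀ n, 0 ≤ r n) (hbdd : ∃ M : ℝ, ∀ n, |r n| ≤ M)
    (c : ℕ → Bool) (Δ : ℕ → ℕ) (hΔ1 : Δ 1 = 1)
    (hrec : ∀ t : ℕ, 1 ≤ t → Δ (t + 1) = if c t then 1 else Δ t + 1) :
    Filter.limsup
      (fun T : ℕ => (1 / (T : ℝ)) *
        ∑ t ∈ Finset.Icc 1 T, (if c t then 0 else r (Δ t)))
      Filter.atTop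
      ≤ ⨆ τ : ℕ, (∑ k ∈ Finset.Icc 1 τ, r k) / ((τ : ℝ) + 1) :=
  stmt_16_general r hbdd c Δ hΔ1 hrec
end
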